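/- Let V : ℝ² ∖ {0} → ℝ be the Kepler potential V(x) = 1/‖x‖, and let β = (β₁,…,β₆) ∈ ℝ⁶. Then V is compatible with the Killing tensor K(β) on ℝ² ∖ {0} (i.e., the Bertrand–Darboux one-form of V and K(β) is closed) if and only if β₃ = 0 and β₁ = β₂. Hence the most general Killing two-tensor of the Euclidean plane compatible with the Kepler potential is, modulo multiples of the metric, the three-parameter family with components K¹¹ = 2β₄x₂ + β₆x₂², K¹² = −β₄x₁ − β₅x₂ − β₆x₁x₂, K²² = 2β₅x₁ + β₆x₁². -/

import Mathlib

open Real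

/-- Partial derivative with respect to the first Cartesian coordinate. -/
noncomputable def pd1 (f : ℝ × ℝ → ℝ) (x : ℝ × ℝ) : ℝ :=
  deriv (fun t => f (t, x.2)) x.1

/-- Partial derivative with respect to the second Cartesian coordinate. -/
noncomputable def pd2 (f : ℝ × ℝ → ℝ) (x : ℝ × ℝ) : ℝ :=
  deriv (fun t => f (x.1, t)) x.2

/-- Component `K¹¹` of the general Killing two-tensor of the Euclidean plane. -/
def K11 (β : Fin 6 → ℝ) (x : ℝ × ℝ) : ℝ := β 0 + 2 * β 3 * x.2 + β 5 * x.2 ^ 2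

/-- Component `K¹² = K²¹` of the general Killing two-tensor of the Euclidean plane. -/
def K12 (β : Fin 6 → ℝ) (x : ℝ × ℝ) : ℝ := β 2 - β 3 * x.1 - β 4 * x.2 - β 5 * x.1 * x.2

/-- Component `K²²` of the general Killing two-tensor of the Euclidean plane. -/
def K22 (β : Fin 6 → ℝ) (x : ℝ × ℝ) : ℝ := β 1 + 2 * β 4 * x.1 + β 5 * x.1 ^ 2

/-- `V` is compatible with `K(β)` on `U` : the Bertrand–Darboux one-form
`(K¹¹∂₁V + K¹²∂₂V)dx₁ + (K¹²∂₁V + K²²∂₂V)dx₂` is closed on `U`. -/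
def Compatible (β : Fin 6 → ℝ) (V : ℝ × ℝ → ℝ) (U : Set (ℝ × ℝ)) : Prop :=
  ∀ x ∈ U,
    pd2 (fun y => K11 β y * pd1 V y + K12 β y * pd2 V y) x
      = pd1 (fun y => K12 β y * pd1 V y + K22 β y * pd2 V y) x

/-- The Kepler potential `V(x) = 1/‖x‖`. -/
noncomputable def kepler : ℝ × ℝ → ℝ :=
  fun x => 1 / Real.sqrt (x.1 ^ 2 + x.2 ^ 2)

/-!
Since `∇V = -x / r³` with `r² = x₁² + x₂²`, along the line on which it is differentiated each
component of the Bertrand–Darboux form is a quadratic polynomial divided by `r³`, and a direct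
computation gives
`∂₂(K¹¹∂₁V + K¹²∂₂V) - ∂₁(K¹²∂₁V + K²²∂₂V) = 3((β 0 - β 1) x₁x₂ + β 2 (x₂² - x₁²)) / r⁵`
(Lean indexes `β` from `0`), with all terms in `β 3, β 4, β 5` cancelling.
This vanishes on `ℝ² ∖ {0}` iff its two coefficients do, as evaluation at `(1, 0)` and `(1, 1)` shows.
-/

lemma sq_add_sq_pos_of_ne_zero {y : ℝ × ℝ} (hy : y ≠ 0) : 0 < y.1 ^ 2 + y.2 ^ 2 := by
  rcases eq_or_ne y.1 0 with h1 | h1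
  · have h2 : y.2 ≠ 0 := fun h2 => hy (Prod.ext h1 h2)
    positivity
  · positivity

section OneVariable

variable {c t : ℝ}

lemma hasDerivAt_one_div_sqrt_sq_add (h : 0 < t ^ 2 + c) :
    HasDerivAt (fun u : ℝ => 1 / √(u ^ 2 + c)) (-t / ((t ^ 2 + c) * √(t ^ 2 + c))) t := by
  have hs : √(t ^ 2 + c) ≠ 0 := by positivity
  have hsq : HasDerivAt (fun u : ℝ => u ^ 2 + c) (2 * t) t := by
    simpa using (hasDerivAt_pow 2 t).add_const c
  simp only [one_div]
  refine ((hsq.sqrt h.ne').inv hs).congr_deriv ?_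
  rw [Real.sq_sqrt h.le]
  field_simp

lemma hasDerivAt_sq_add_mul_sqrt_sq_add (h : 0 < t ^ 2 + c) :
    HasDerivAt (fun u : ℝ => (u ^ 2 + c) * √(u ^ 2 + c)) (3 * t * √(t ^ 2 + c)) t := by
  have hs : √(t ^ 2 + c) ≠ 0 := by positivity
  have hsq : HasDerivAt (fun u : ℝ => u ^ 2 + c) (2 * t) t := by
    simpa using (hasDerivAt_pow 2 t).add_const c
  refine (hsq.mul (hsq.sqrt h.ne')).congr_deriv ?_
  field_simp
  linear_combination (-t) * Real.sq_sqrt h.le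

lemma hasDerivAt_quadratic_div_sq_add_mul_sqrt_sq_add (a₀ a₁ a₂ : ℝ) (h : 0 < t ^ 2 + c) :
    HasDerivAt (fun u : ℝ => (a₀ + a₁ * u + a₂ * u ^ 2) / ((u ^ 2 + c) * √(u ^ 2 + c)))
      (((a₁ + 2 * a₂ * t) * (t ^ 2 + c) - 3 * t * (a₀ + a₁ * t + a₂ * t ^ 2))
        / ((t ^ 2 + c) ^ 2 * √(t ^ 2 + c))) t := by
  have hs : √(t ^ 2 + c) ≠ 0 := by positivity
  have hnum : HasDerivAt (fun u : ℝ => a₀ + a₁ * u + a₂ * u ^ 2) (a₁ + 2 * a₂ * t) t := by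
    refine ((((hasDerivAt_id t).const_mul a₁).const_add a₀).add
      ((hasDerivAt_pow 2 t).const_mul a₂)).congr_deriv ?_
    push_cast
    ring
  refine (hnum.div (hasDerivAt_sq_add_mul_sqrt_sq_add h) (by positivity)).congr_deriv ?_
  field_simp

end OneVariable

lemma pd1_kepler {y : ℝ × ℝ} (hy : y ≠ 0) :
    pd1 kepler y = -y.1 / ((y.1 ^ 2 + y.2 ^ 2) * √(y.1 ^ 2 + y.2 ^ 2)) := by
  simpa [pd1, kepler] using
    (hasDerivAt_one_div_sqrt_sq_add (c := y.2 ^ 2) (sq_add_sq_pos_of_ne_zero hy)).deriv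

lemma pd2_kepler {y : ℝ × ℝ} (hy : y ≠ 0) :
    pd2 kepler y = -y.2 / ((y.1 ^ 2 + y.2 ^ 2) * √(y.1 ^ 2 + y.2 ^ 2)) := by
  have h : 0 < y.2 ^ 2 + y.1 ^ 2 := by linarith [sq_add_sq_pos_of_ne_zero hy]
  have hswap : (fun t => kepler (y.1, t)) = fun t => 1 / √(t ^ 2 + y.1 ^ 2) := by
    funext t
    simp [kepler, add_comm]
  rw [pd2, hswap, (hasDerivAt_one_div_sqrt_sq_add h).deriv, add_comm (y.2 ^ 2)]

section BertrandDarboux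

variable (β : Fin 6 → ℝ) {x : ℝ × ℝ}

lemma pd2_bertrandDarboux_fst_kepler (hx : x ≠ 0) :
    pd2 (fun y => K11 β y * pd1 kepler y + K12 β y * pd2 kepler y) x
      = ((-β 2 - β 3 * x.1 + 2 * β 4 * x.2) * (x.2 ^ 2 + x.1 ^ 2)
          - 3 * x.2 * (-β 0 * x.1 + (-β 2 - β 3 * x.1) * x.2 + β 4 * x.2 ^ 2))
        / ((x.2 ^ 2 + x.1 ^ 2) ^ 2 * √(x.2 ^ 2 + x.1 ^ 2)) := by
  have h : 0 < x.2 ^ 2 + x.1 ^ 2 := by linarith [sq_add_sq_pos_of_ne_zero hx]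
  have hne : ∀ᶠ t in nhds x.2, ((x.1, t) : ℝ × ℝ) ≠ 0 :=
    (show ContinuousAt (fun t : ℝ => ((x.1, t) : ℝ × ℝ)) x.2 by fun_prop).eventually_ne
      (by simpa using hx)
  have hslice : (fun t => K11 β (x.1, t) * pd1 kepler (x.1, t) + K12 β (x.1, t) * pd2 kepler (x.1, t))
      =ᶠ[nhds x.2] fun t => (-β 0 * x.1 + (-β 2 - β 3 * x.1) * t + β 4 * t ^ 2)
        / ((t ^ 2 + x.1 ^ 2) * √(t ^ 2 + x.1 ^ 2)) := by
    filter_upwards [hne] with t ht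
    have hs : 0 < x.1 ^ 2 + t ^ 2 := sq_add_sq_pos_of_ne_zero ht
    rw [pd1_kepler ht, pd2_kepler ht, add_comm (t ^ 2)]
    simp only [K11, K12]
    field_simp
    ring
  exact hslice.deriv_eq.trans (hasDerivAt_quadratic_div_sq_add_mul_sqrt_sq_add _ _ _ h).deriv

lemma pd1_bertrandDarboux_snd_kepler (hx : x ≠ 0) :
    pd1 (fun y => K12 β y * pd1 kepler y + K22 β y * pd2 kepler y) x
      = ((-β 2 - β 4 * x.2 + 2 * β 3 * x.1) * (x.1 ^ 2 + x.2 ^ 2)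
          - 3 * x.1 * (-β 1 * x.2 + (-β 2 - β 4 * x.2) * x.1 + β 3 * x.1 ^ 2))
        / ((x.1 ^ 2 + x.2 ^ 2) ^ 2 * √(x.1 ^ 2 + x.2 ^ 2)) := by
  have h : 0 < x.1 ^ 2 + x.2 ^ 2 := sq_add_sq_pos_of_ne_zero hx
  have hne : ∀ᶠ t in nhds x.1, ((t, x.2) : ℝ × ℝ) ≠ 0 :=
    (show ContinuousAt (fun t : ℝ => ((t, x.2) : ℝ × ℝ)) x.1 by fun_prop).eventually_ne
      (by simpa using hx)
  have hslice : (fun t => K12 β (t, x.2) * pd1 kepler (t, x.2) + K22 β (t, x.2) * pd2 kepler (t, x.2))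
      =ᶠ[nhds x.1] fun t => (-β 1 * x.2 + (-β 2 - β 4 * x.2) * t + β 3 * t ^ 2)
        / ((t ^ 2 + x.2 ^ 2) * √(t ^ 2 + x.2 ^ 2)) := by
    filter_upwards [hne] with t ht
    have hs : 0 < t ^ 2 + x.2 ^ 2 := sq_add_sq_pos_of_ne_zero ht
    rw [pd1_kepler ht, pd2_kepler ht]
    simp only [K12, K22]
    field_simp
    ring
  exact hslice.deriv_eq.trans (hasDerivAt_quadratic_div_sq_add_mul_sqrt_sq_add _ _ _ h).deriv

lemma bertrandDarboux_kepler_closed_iff (hx : x ≠ 0) :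
    pd2 (fun y => K11 β y * pd1 kepler y + K12 β y * pd2 kepler y) x
        = pd1 (fun y => K12 β y * pd1 kepler y + K22 β y * pd2 kepler y) x ↔
      (β 0 - β 1) * x.1 * x.2 + β 2 * (x.2 ^ 2 - x.1 ^ 2) = 0 := by
  have h : 0 < x.1 ^ 2 + x.2 ^ 2 := sq_add_sq_pos_of_ne_zero hx
  have hden : (x.1 ^ 2 + x.2 ^ 2) ^ 2 * √(x.1 ^ 2 + x.2 ^ 2) ≠ 0 := by positivity
  rw [pd2_bertrandDarboux_fst_kepler β hx, pd1_bertrandDarboux_snd_kepler β hx,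
    add_comm (x.2 ^ 2), div_left_inj' hden, ← sub_eq_zero]
  constructor
  · intro hE
    linear_combination hE / 3
  · intro hE
    linear_combination 3 * hE

end BertrandDarboux

/-- The Kepler potential is compatible with the Killing tensor `K(β)` on
`ℝ² ∖ {0}` if and only if `β₃ = 0` and `β₁ = β₂`; hence the most general Killing
two-tensor compatible with the Kepler potential is, modulo multiples of the
metric, the three-parameter family `K¹¹ = 2β₄x₂ + β₆x₂²`,
`K¹² = −β₄x₁ − β₅x₂ − β₆x₁x₂`, `K²² = 2β₅x₁ + β₆x₁²`. -/
theorem kepler_compatible_iff (β : Fin 6 → ℝ) :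
    Compatible β kepler {x : ℝ × ℝ | x ≠ 0} ↔ β 2 = 0 ∧ β 0 = β 1 := by
  calc Compatible β kepler {x : ℝ × ℝ | x ≠ 0}
      ↔ ∀ x : ℝ × ℝ, x ≠ 0 → (β 0 - β 1) * x.1 * x.2 + β 2 * (x.2 ^ 2 - x.1 ^ 2) = 0 :=
        forall₂_congr fun _ hx => bertrandDarboux_kepler_closed_iff β hx
    _ ↔ β 2 = 0 ∧ β 0 = β 1 := by
      refine ⟨fun h => ?_, fun ⟨h2, h01⟩ x _ => by rw [h2, h01]; ring⟩
      have at_e₁ := h (1, 0) (by simp)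
      have at_diag := h (1, 1) (by simp)
      norm_num at at_e₁ at_diag
      exact ⟨at_e₁, by linarith⟩
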